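/- Pushforward of relative translations along vertical fibrations: let φ : X → Y, g : X → Z, h : Y → Z be s-fibrations between compact ergodic gluing cubespaces with g = h∘φ and φ surjective and vertical. Then for every i ≥ 1 there is a group homomorphism Φ : Aut_i(g) → Aut_i(h) such that Φ(u) ∘ φ = φ ∘ u for all u ∈ Aut_i(g). -/

import Mathlib

open Function Set

/-- The all-ones vertex `1⃗` of the discrete cube `{0,1}^k`. -/
def topVtx (k : ℕ) : Fin k → Bool := fun _ => true

/-- A family of cube sets on a space `X`: for each `k`, a set of `k`-configurations. -/
structure CubeFamily (X : Type*) where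
  cubes : ∀ k : ℕ, Set ((Fin k → Bool) → X)

/-- A morphism of discrete cubes: each coordinate function is constantly `0`,
constantly `1`, a coordinate `ω i`, or a negated coordinate `!ω i`. -/
def IsDiscreteCubeMorphism {k l : ℕ} (ρ : (Fin k → Bool) → (Fin l → Bool)) : Prop :=
  ∀ j : Fin l, (∀ ω, ρ ω j = false) ∨ (∀ ω, ρ ω j = true) ∨
    (∃ i : Fin k, ∀ ω, ρ ω j = ω i) ∨ (∃ i : Fin k, ∀ ω, ρ ω j = !(ω i))

/-- The cubespace axioms: cube sets are closed, `C^0(X) = X`, and cubes are stable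
under precomposition with morphisms of discrete cubes. -/
def CubeFamily.IsCubespace {X : Type*} [TopologicalSpace X] (S : CubeFamily X) : Prop :=
  (∀ k, IsClosed (S.cubes k)) ∧ S.cubes 0 = Set.univ ∧
    ∀ {k l : ℕ} (ρ : (Fin k → Bool) → (Fin l → Bool)), IsDiscreteCubeMorphism ρ →
      ∀ c ∈ S.cubes l, (fun ω => c (ρ ω)) ∈ S.cubes k

/-- A cubespace morphism: a continuous map sending cubes to cubes. -/
def IsMorphism {X Y : Type*} [TopologicalSpace X] [TopologicalSpace Y]
    (S : CubeFamily X) (T : CubeFamily Y) (f : X → Y) : Prop :=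
  Continuous f ∧ ∀ k, ∀ c ∈ S.cubes k, (fun ω => f (c ω)) ∈ T.cubes k

/-- `lam` is a `k`-corner: each lower face `{ω : ω i = 0}` restricts to a `(k-1)`-cube.
(The restriction of `lam` to the face `{ω : ω i = 0}` is a `(k-1)`-cube iff the
degenerate configuration `ω ↦ lam (update ω i false)` is a `k`-cube, by the
discrete-cube-morphism axiom; the value of `lam` at `topVtx k` is irrelevant here.) -/
def IsCubeCorner {X : Type*} (S : CubeFamily X) {k : ℕ} (lam : (Fin k → Bool) → X) : Prop :=
  ∀ i : Fin k, (fun ω => lam (Function.update ω i false)) ∈ S.cubes k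

/-- Relative `k`-completion for `f : X → Y`: every `k`-corner in `X` whose `f`-image
extends to a `k`-cube `c` of `Y` can be completed to a `k`-cube of `X` lying over `c`. -/
def HasCompletionAt {X Y : Type*} (S : CubeFamily X) (T : CubeFamily Y) (f : X → Y)
    (k : ℕ) : Prop :=
  ∀ (lam : (Fin k → Bool) → X) (c : (Fin k → Bool) → Y), IsCubeCorner S lam → c ∈ T.cubes k →
    (∀ ω, ω ≠ topVtx k → f (lam ω) = c ω) →
    ∃ c₀ ∈ S.cubes k, (∀ ω, ω ≠ topVtx k → c₀ ω = lam ω) ∧ (fun ω => f (c₀ ω)) = c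

/-- A fibration: a cubespace morphism with `k`-completion for all `k ≥ 0`. -/
def IsFibration {X Y : Type*} [TopologicalSpace X] [TopologicalSpace Y]
    (S : CubeFamily X) (T : CubeFamily Y) (f : X → Y) : Prop :=
  IsMorphism S T f ∧ ∀ k, HasCompletionAt S T f k

/-- Relative `k`-uniqueness: two `k`-cubes agreeing off the top vertex with equal
`f`-images are equal. -/
def HasUniquenessAt {X Y : Type*} (S : CubeFamily X) (T : CubeFamily Y) (f : X → Y)
    (k : ℕ) : Prop :=
  ∀ c ∈ S.cubes k, ∀ c' ∈ S.cubes k, (∀ ω, ω ≠ topVtx k → c ω = c' ω) →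
    (fun ω => f (c ω)) = (fun ω => f (c' ω)) → c = c'

/-- An `s`-fibration: a fibration with `(s+1)`-uniqueness. -/
def IsSFibration {X Y : Type*} [TopologicalSpace X] [TopologicalSpace Y]
    (S : CubeFamily X) (T : CubeFamily Y) (f : X → Y) (s : ℕ) : Prop :=
  IsFibration S T f ∧ HasUniquenessAt S T f (s + 1)

/-- Absolute fibrancy: every `k`-corner completes to a `k`-cube. -/
def IsFibrant {X : Type*} (S : CubeFamily X) : Prop :=
  ∀ (k : ℕ) (lam : (Fin k → Bool) → X), IsCubeCorner S lam →
    ∃ c₀ ∈ S.cubes k, ∀ ω, ω ≠ topVtx k → c₀ ω = lam ω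

/-- Absolute `k`-uniqueness. -/
def HasUnique {X : Type*} (S : CubeFamily X) (k : ℕ) : Prop :=
  ∀ c ∈ S.cubes k, ∀ c' ∈ S.cubes k, (∀ ω, ω ≠ topVtx k → c ω = c' ω) → c = c'

/-- Ergodicity: every pair of points is a `1`-cube. -/
def IsErgodic {X : Type*} (S : CubeFamily X) : Prop := S.cubes 1 = Set.univ

/-- Concatenation `[c₁, c₂]` of two `k`-configurations along the last coordinate. -/
def concatCube {X : Type*} {k : ℕ} (c₁ c₂ : (Fin k → Bool) → X) :
    (Fin (k + 1) → Bool) → X :=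
  fun ω => if ω (Fin.last k) = true then c₂ (fun i => ω i.castSucc)
           else c₁ (fun i => ω i.castSucc)

/-- The gluing property. -/
def IsGluing {X : Type*} (S : CubeFamily X) : Prop :=
  ∀ (k : ℕ) (c₁ c₂ c₃ : (Fin k → Bool) → X), c₁ ∈ S.cubes k → c₂ ∈ S.cubes k →
    c₃ ∈ S.cubes k → concatCube c₁ c₂ ∈ S.cubes (k + 1) →
    concatCube c₂ c₃ ∈ S.cubes (k + 1) → concatCube c₁ c₃ ∈ S.cubes (k + 1)

/-- The `s`-th canonical relation `x ∼ₛ x'`. -/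
def CanonRel {X : Type*} (S : CubeFamily X) (s : ℕ) (x x' : X) : Prop :=
  ∃ c ∈ S.cubes (s + 1), ∃ c' ∈ S.cubes (s + 1),
    (∀ ω, ω ≠ topVtx (s + 1) → c ω = c' ω) ∧ c (topVtx (s + 1)) = x ∧ c' (topVtx (s + 1)) = x'

/-- The `s`-th canonical relation relative to `f` : `x ∼_{f,s} x'`. -/
def RelCanonRel {X Y : Type*} (S : CubeFamily X) (f : X → Y) (s : ℕ) (x x' : X) : Prop :=
  CanonRel S s x x' ∧ f x = f x'

/-- `F ⊆ {0,1}^n` is a face of codimension `k`: obtained by fixing the values of `k`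
coordinates. -/
def IsFaceOfCodim {n : ℕ} (F : Set (Fin n → Bool)) (k : ℕ) : Prop :=
  ∃ (I : Finset (Fin n)) (b : Fin n → Bool), I.card = k ∧ F = {ω | ∀ i ∈ I, ω i = b i}

open Classical in
/-- Modify the configuration `c` by applying `φ` on the face `F`. -/
noncomputable def faceModify {X : Type*} {n : ℕ} (F : Set (Fin n → Bool)) (φ : X → X)
    (c : (Fin n → Bool) → X) : (Fin n → Bool) → X :=
  fun ω => if ω ∈ F then φ (c ω) else c ω

/-- `φ` is a `k`-translation of the cubespace `S`: a cubespace automorphism such that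
modifying any `n`-cube (`n ≥ k`) by `φ` along any codimension-`k` face yields a cube. -/
def IsTranslationOf {X : Type*} (S : CubeFamily X) (φ : X → X) (k : ℕ) : Prop :=
  (∀ (n : ℕ) (c : (Fin n → Bool) → X), c ∈ S.cubes n ↔ (fun ω => φ (c ω)) ∈ S.cubes n) ∧
  ∀ (n : ℕ), k ≤ n → ∀ F : Set (Fin n → Bool), IsFaceOfCodim F k →
    ∀ c ∈ S.cubes n, faceModify F φ c ∈ S.cubes n

/-- The subcubespace on a subset `A ⊆ X`: cubes of `X` taking values in `A`. -/
def subFamily {X : Type*} (S : CubeFamily X) (A : Set X) : CubeFamily X :=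
  ⟨fun k => {c | c ∈ S.cubes k ∧ ∀ ω, c ω ∈ A}⟩

/-- `u` belongs to the `k`-th translation group `Aut_k(g)` of a map `g : X → Z`: it is
a homeomorphism of `X` fixing the fibers of `g` and restricting to a `k`-translation of
each subcubespace `g⁻¹(z)`. -/
def MemAut {X Z : Type*} [TopologicalSpace X] (S : CubeFamily X) (g : X → Z)
    (u : X → X) (k : ℕ) : Prop :=
  IsHomeomorph u ∧ (∀ x, g (u x) = g x) ∧
    ∀ z : Z, IsTranslationOf (subFamily S (g ⁻¹' {z})) u k


/-!
Put `Φ u := φ ∘ u ∘ φ⁻¹`; this is well defined because `u` permutes the fibres of `φ`. Indeed,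
if `φ x = φ x'` then verticality gives `x ∼ₛ₋₁ x'`, and in a gluing cubespace this makes the
configuration equal to `x` everywhere except `x'` at the top an `s`-cube, lying in a fibre of
`g`. As `u` is a `1`-translation there, `[d, u ∘ d]` is an `(s+1)`-cube both for this `d` and
for the constant `x`; their images under `φ` agree off the top and lie over one point of `Z`,
so `(s+1)`-uniqueness of `h` gives `φ (u x) = φ (u x')`. Cubes of `Y` lift along the fibration
`φ`, which transfers the translation property from `u` to `Φ u`.
-/

def CubeFamily.ClosedUnderMorphisms {X : Type*} (S : CubeFamily X) : Prop :=
  ∀ {k l : ℕ} (ρ : (Fin k → Bool) → (Fin l → Bool)), IsDiscreteCubeMorphism ρ →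
    ∀ c ∈ S.cubes l, (fun ω => c (ρ ω)) ∈ S.cubes k

theorem CubeFamily.IsCubespace.closedUnderMorphisms {X : Type*} [TopologicalSpace X]
    {S : CubeFamily X} (hS : S.IsCubespace) : S.ClosedUnderMorphisms :=
  hS.2.2

theorem CubeFamily.ClosedUnderMorphisms.subFamily {X : Type*} {S : CubeFamily X}
    (hS : S.ClosedUnderMorphisms) (A : Set X) : (subFamily S A).ClosedUnderMorphisms :=
  fun ρ hρ _ hc => ⟨hS ρ hρ _ hc.1, fun _ => hc.2 _⟩

theorem isDiscreteCubeMorphism_reindex {k l : ℕ} (e : Fin l → Fin k) :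
    IsDiscreteCubeMorphism fun (ω : Fin k → Bool) j => ω (e j) :=
  fun j => Or.inr <| Or.inr <| Or.inl ⟨e j, fun _ => rfl⟩

theorem isDiscreteCubeMorphism_snoc {n : ℕ} (b : Bool) :
    IsDiscreteCubeMorphism fun (ω : Fin n → Bool) => (Fin.snoc ω b : Fin (n + 1) → Bool) := by
  intro j
  induction j using Fin.lastCases with
  | last => cases b <;> simp
  | cast i => exact Or.inr <| Or.inr <| Or.inl ⟨i, fun ω => by simp⟩

theorem isDiscreteCubeMorphism_flipLast {n : ℕ} :
    IsDiscreteCubeMorphism fun (ω : Fin (n + 1) → Bool) =>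
      (Fin.snoc (Fin.init ω) (!ω (Fin.last n)) : Fin (n + 1) → Bool) := by
  intro j
  induction j using Fin.lastCases with
  | last => exact Or.inr <| Or.inr <| Or.inr ⟨Fin.last n, fun ω => by simp⟩
  | cast i => exact Or.inr <| Or.inr <| Or.inl ⟨i.castSucc, fun ω => by simp [Fin.init]⟩

theorem snoc_eq_topVtx_iff {n : ℕ} {w : Fin n → Bool} {b : Bool} :
    (Fin.snoc w b : Fin (n + 1) → Bool) = topVtx (n + 1) ↔ w = topVtx n ∧ b = true := by
  rw [← Fin.snoc_init_self (topVtx (n + 1)), Fin.snoc_injective2.eq_iff]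
  rfl

section Concat

variable {X : Type*} {S : CubeFamily X} {n : ℕ}

@[simp]
theorem concatCube_snoc (c₁ c₂ : (Fin n → Bool) → X) (w : Fin n → Bool) (b : Bool) :
    concatCube c₁ c₂ (Fin.snoc w b) = if b then c₂ w else c₁ w := by
  simp [concatCube]

theorem concatCube_topVtx (c₁ c₂ : (Fin n → Bool) → X) :
    concatCube c₁ c₂ (topVtx (n + 1)) = c₂ (topVtx n) := by
  rw [← Fin.snoc_init_self (topVtx (n + 1)), concatCube_snoc]
  rfl

theorem concatCube_eq_iff {c₁ c₂ : (Fin n → Bool) → X} {F : (Fin (n + 1) → Bool) → X} :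
    concatCube c₁ c₂ = F ↔ ∀ w b, F (Fin.snoc w b) = if b then c₂ w else c₁ w := by
  refine ⟨fun h w b => by rw [← h, concatCube_snoc], fun h => funext fun ω => ?_⟩
  rw [← Fin.snoc_init_self ω, h, concatCube_snoc]

theorem concatCube_snoc_self (F : (Fin (n + 1) → Bool) → X) :
    concatCube (fun w => F (Fin.snoc w false)) (fun w => F (Fin.snoc w true)) = F :=
  concatCube_eq_iff.2 fun _ b => by cases b <;> rfl

theorem CubeFamily.IsCubespace.const_mem [TopologicalSpace X] (hS : S.IsCubespace) (x : X)
    (k : ℕ) : (fun _ => x) ∈ S.cubes k :=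
  hS.2.2 _ (isDiscreteCubeMorphism_reindex Fin.elim0) (fun _ => x) (hS.2.1 ▸ trivial)

theorem CubeFamily.ClosedUnderMorphisms.left_mem (hS : S.ClosedUnderMorphisms)
    {c₁ c₂ : (Fin n → Bool) → X} (hc : concatCube c₁ c₂ ∈ S.cubes (n + 1)) :
    c₁ ∈ S.cubes n := by
  simpa using hS _ (isDiscreteCubeMorphism_snoc false) _ hc

theorem CubeFamily.ClosedUnderMorphisms.right_mem (hS : S.ClosedUnderMorphisms)
    {c₁ c₂ : (Fin n → Bool) → X} (hc : concatCube c₁ c₂ ∈ S.cubes (n + 1)) :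
    c₂ ∈ S.cubes n := by
  simpa using hS _ (isDiscreteCubeMorphism_snoc true) _ hc

theorem CubeFamily.ClosedUnderMorphisms.concatCube_self_mem (hS : S.ClosedUnderMorphisms)
    {c : (Fin n → Bool) → X} (hc : c ∈ S.cubes n) : concatCube c c ∈ S.cubes (n + 1) := by
  convert hS _ (isDiscreteCubeMorphism_reindex Fin.castSucc) _ hc using 1
  exact concatCube_eq_iff.2 fun w b => by cases b <;> simp

theorem CubeFamily.ClosedUnderMorphisms.concatCube_swap_mem (hS : S.ClosedUnderMorphisms)
    {c₁ c₂ : (Fin n → Bool) → X} (hc : concatCube c₁ c₂ ∈ S.cubes (n + 1)) :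
    concatCube c₂ c₁ ∈ S.cubes (n + 1) := by
  convert hS _ isDiscreteCubeMorphism_flipLast _ hc using 1
  exact concatCube_eq_iff.2 fun w b => by cases b <;> simp

end Concat

section Translation

variable {X : Type*} {S : CubeFamily X} {u : X → X}

theorem IsTranslationOf.of_succ (hS : S.ClosedUnderMorphisms) {k : ℕ}
    (hu : IsTranslationOf S u (k + 1)) : IsTranslationOf S u k := by
  refine ⟨hu.1, fun n hkn F ⟨I, b, hI, hF⟩ c hc => ?_⟩
  -- Modify `[c, c]` on the face `F × {1}` and restrict to the upper half.
  set I' := insert (Fin.last n) (I.map Fin.castSuccEmb)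
  set b' : Fin (n + 1) → Bool := Fin.snoc b true
  have hface : IsFaceOfCodim {ω | ∀ j ∈ I', ω j = b' j} (k + 1) := ⟨I', b', by
    rw [Finset.card_insert_of_notMem (by simp [Fin.castSucc_ne_last]), Finset.card_map, hI], rfl⟩
  have h := hS _ (isDiscreteCubeMorphism_snoc true) _
    (hu.2 (n + 1) (by omega) _ hface _ (hS.concatCube_self_mem hc))
  convert h using 1
  funext ω
  simp [faceModify, hF, I', b']

theorem IsTranslationOf.of_le (hS : S.ClosedUnderMorphisms) {i k : ℕ} (hki : k ≤ i)
    (hu : IsTranslationOf S u i) : IsTranslationOf S u k := by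
  induction i, hki using Nat.le_induction with
  | base => exact hu
  | succ i _ ih => exact ih (hu.of_succ hS)

theorem IsTranslationOf.concatCube_mem (hS : S.ClosedUnderMorphisms)
    (hu : IsTranslationOf S u 1) {n : ℕ} {d : (Fin n → Bool) → X} (hd : d ∈ S.cubes n) :
    concatCube d (u ∘ d) ∈ S.cubes (n + 1) := by
  have hface : IsFaceOfCodim {ω : Fin (n + 1) → Bool | ω (Fin.last n) = true} 1 :=
    ⟨{Fin.last n}, fun _ => true, rfl, by simp⟩
  convert hu.2 (n + 1) le_add_self _ hface _ (hS.concatCube_self_mem hd) using 1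
  refine concatCube_eq_iff.2 fun w b => ?_
  cases b <;> simp [faceModify]

theorem IsTranslationOf.concatCube_inv_mem (hS : S.ClosedUnderMorphisms)
    (hu : IsTranslationOf S u 1) {v : X → X} (huv : RightInverse v u) {n : ℕ}
    {d : (Fin n → Bool) → X} (hd : d ∈ S.cubes n) :
    concatCube d (v ∘ d) ∈ S.cubes (n + 1) := by
  have hvd : v ∘ d ∈ S.cubes n := (hu.1 n _).2 (by simpa [huv _] using hd)
  simpa [comp_def, huv _] using hS.concatCube_swap_mem (hu.concatCube_mem hS hvd)

end Translation

section Collapse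

variable {X : Type*} {S : CubeFamily X} {r : ℕ}

/-- `collapse I` sets the coordinates in `I` to `1` and keeps the last one only where all of
them were `1` already. If `F = [q, q']` with `q`, `q'` agreeing off the top, then
`F ∘ collapse univ` is `q 1⃗` everywhere except for `q' 1⃗` on top; by gluing, precomposition
with `collapse {l}` preserves cubes. -/
def collapse (I : Finset (Fin r)) (ω : Fin (r + 1) → Bool) : Fin (r + 1) → Bool :=
  Fin.snoc (fun i => ω i.castSucc || decide (i ∈ I))
    (ω (Fin.last r) && decide (∀ i ∈ I, ω i.castSucc = true))

@[simp]
theorem collapse_snoc (I : Finset (Fin r)) (w : Fin r → Bool) (b : Bool) :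
    collapse I (Fin.snoc w b) =
      Fin.snoc (fun i => w i || decide (i ∈ I)) (b && decide (∀ i ∈ I, w i = true)) := by
  simp [collapse]

theorem collapse_empty : collapse (∅ : Finset (Fin r)) = id := by
  funext ω
  simp [collapse, Fin.init_def.symm]

theorem collapse_collapse_singleton (I : Finset (Fin r)) (l : Fin r) (ω : Fin (r + 1) → Bool) :
    collapse I (collapse {l} ω) = collapse (insert l I) ω := by
  induction ω using Fin.snocCases with
  | _ w b =>
    simp only [collapse_snoc]
    congr 1
    · funext i
      simp [Bool.or_assoc]
    · by_cases hl : w l = true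
      · have hw : ∀ i, (w i = true ∨ i = l) ↔ w i = true :=
          fun i => ⟨fun h => h.elim id (· ▸ hl), Or.inl⟩
        simp [hl, hw]
      · simp [hl]

theorem collapse_univ (w : Fin r → Bool) (b : Bool) :
    collapse Finset.univ (Fin.snoc w b) = Fin.snoc (topVtx r) (b && decide (w = topVtx r)) := by
  rw [collapse_snoc]
  congr 1 <;> simp [topVtx, funext_iff]

def HalvesAgreeOffTop (F : (Fin (r + 1) → Bool) → X) : Prop :=
  ∀ w, w ≠ topVtx r → F (Fin.snoc w true) = F (Fin.snoc w false)

theorem HalvesAgreeOffTop.comp_collapse {F : (Fin (r + 1) → Bool) → X}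
    (hF : HalvesAgreeOffTop F) (I : Finset (Fin r)) : HalvesAgreeOffTop (F ∘ collapse I) := by
  intro w hw
  by_cases hI : ∀ i ∈ I, w i = true
  · have : (fun i => w i || decide (i ∈ I)) = w :=
      funext fun i => by by_cases hi : i ∈ I <;> simp [hi, hI]
    rw [comp_apply, comp_apply, collapse_snoc, collapse_snoc, decide_eq_true hI, this]
    simpa using hF w hw
  · simp [hI]

end Collapse

section Gluing

variable {X : Type*} {S : CubeFamily X} {r : ℕ}

theorem comp_collapse_singleton_mem (hS : S.ClosedUnderMorphisms) (hgS : IsGluing S)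
    {F : (Fin (r + 1) → Bool) → X} (hF : F ∈ S.cubes (r + 1)) (hag : HalvesAgreeOffTop F)
    (l : Fin r) : F ∘ collapse {l} ∈ S.cubes (r + 1) := by
  set Z : (Fin r → Bool) → X := fun w => F (Fin.snoc (update w l true) false)
  set A : (Fin r → Bool) → X := fun w => F (Fin.snoc (update w l false) false)
  set B : (Fin r → Bool) → X := fun w => F (Fin.snoc (update w l true) (w l))
  have hlow : (fun w => F (Fin.snoc w false)) ∈ S.cubes r :=
    hS.left_mem (by rwa [concatCube_snoc_self])
  have hAZ : concatCube A Z ∈ S.cubes (r + 1) := by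
    convert hS _ (isDiscreteCubeMorphism_reindex
      fun i => if i = l then Fin.last r else i.castSucc) _ hlow using 1
    refine concatCube_eq_iff.2 fun w b => ?_
    have : (fun i => (Fin.snoc w b : Fin (r + 1) → Bool)
        (if i = l then Fin.last r else i.castSucc)) = update w l b := by
      funext i
      by_cases hi : i = l <;> simp [hi]
    cases b <;> simp [this, A, Z]
  -- Exchanging the last coordinate with `l` turns `F` into `[A, B]`.
  have hAB : concatCube A B ∈ S.cubes (r + 1) := by
    convert hS _ (isDiscreteCubeMorphism_reindex (Equiv.swap l.castSucc (Fin.last r))) _ hF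
      using 1
    refine concatCube_eq_iff.2 fun w b => ?_
    have : (fun j => (Fin.snoc w b : Fin (r + 1) → Bool) (Equiv.swap l.castSucc (Fin.last r) j))
        = Fin.snoc (update w l b) (w l) := by
      funext j
      induction j using Fin.lastCases with
      | last => simp
      | cast i =>
        by_cases hi : i = l
        · subst hi; simp
        · simp [hi, Equiv.swap_apply_of_ne_of_ne, Fin.castSucc_ne_last]
    cases b
    · by_cases hl : w l = true
      · simpa [this, hl, A] using
          hag (update w l false) fun h => by simpa [topVtx] using congrFun h l
      · simp [this, hl, A]
    · simp [this, B]
  have hZB := hgS r Z A B (hS.right_mem hAZ) (hS.left_mem hAZ) (hS.right_mem hAB)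
    (hS.concatCube_swap_mem hAZ) hAB
  convert hZB using 1
  refine (concatCube_eq_iff.2 fun w b => ?_).symm
  have : (fun i => w i || decide (i ∈ ({l} : Finset (Fin r)))) = update w l true := by
    funext i
    by_cases hi : i = l <;> simp [hi]
  rw [comp_apply, collapse_snoc, this]
  cases b <;> simp [Z, B]

theorem comp_collapse_mem (hS : S.ClosedUnderMorphisms) (hgS : IsGluing S)
    {F : (Fin (r + 1) → Bool) → X} (hF : F ∈ S.cubes (r + 1)) (hag : HalvesAgreeOffTop F)
    (I : Finset (Fin r)) : F ∘ collapse I ∈ S.cubes (r + 1) := by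
  induction I using Finset.induction_on with
  | empty => simpa [collapse_empty] using hF
  | insert l I _ ih =>
    have e : (F ∘ collapse I) ∘ collapse {l} = F ∘ collapse (insert l I) :=
      funext fun ω => congrArg F (collapse_collapse_singleton I l ω)
    exact e ▸ comp_collapse_singleton_mem hS hgS ih (hag.comp_collapse I) l

theorem CanonRel.update_const_mem (hS : S.ClosedUnderMorphisms) (hgS : IsGluing S) {x x' : X}
    (hx : CanonRel S r x x') :
    update (fun _ => x) (topVtx (r + 1)) x' ∈ S.cubes (r + 1) := by
  obtain ⟨c, hc, c', hc', hcc', rfl, rfl⟩ := hx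
  set q : (Fin r → Bool) → X := fun w => c (Fin.snoc w false)
  set q₁ : (Fin r → Bool) → X := fun w => c (Fin.snoc w true)
  set q₁' : (Fin r → Bool) → X := fun w => c' (Fin.snoc w true)
  have hsnoc : ∀ w b, w ≠ topVtx r ∨ b = false → c (Fin.snoc w b) = c' (Fin.snoc w b) :=
    fun w b h => hcc' _ (by rw [Ne, snoc_eq_topVtx_iff]; cases b <;> simp_all)
  have hc_eq : concatCube q q₁ = c := concatCube_snoc_self c
  have hc'_eq : concatCube q q₁' = c' := by
    rw [← concatCube_snoc_self c']
    congr 1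
    exact funext fun w => hsnoc w false (Or.inr rfl)
  -- Gluing `[q₁, q]` to `[q, q₁']` puts `x` and `x'` on top of a single cube.
  have hF : concatCube q₁ q₁' ∈ S.cubes (r + 1) :=
    hgS r q₁ q q₁' (hS.right_mem (hc_eq ▸ hc)) (hS.left_mem (hc_eq ▸ hc))
      (hS.right_mem (hc'_eq ▸ hc')) (hS.concatCube_swap_mem (hc_eq ▸ hc)) (hc'_eq ▸ hc')
  have hag : HalvesAgreeOffTop (concatCube q₁ q₁') := fun w hw => by
    simpa [q₁, q₁'] using (hsnoc w true (Or.inl hw)).symm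
  convert comp_collapse_mem hS hgS hF hag Finset.univ using 1
  funext ω
  induction ω using Fin.snocCases with
  | _ w b =>
    have htop : (Fin.snoc (topVtx r) true : Fin (r + 1) → Bool) = topVtx (r + 1) :=
      snoc_eq_topVtx_iff.2 ⟨rfl, rfl⟩
    rw [comp_apply, collapse_univ, concatCube_snoc, update_apply]
    by_cases hw : w = topVtx r <;> cases b <;> simp [hw, q₁, q₁', htop, snoc_eq_topVtx_iff]

end Gluing

theorem CanonRel.refl {X : Type*} [TopologicalSpace X] {S : CubeFamily X} (hS : S.IsCubespace)
    (r : ℕ) (x : X) : CanonRel S r x x :=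
  ⟨_, hS.const_mem x _, _, hS.const_mem x _, fun _ _ => rfl, rfl, rfl⟩

theorem factorsThrough_of_vertical {X Y Z : Type*} [TopologicalSpace X] [TopologicalSpace Y]
    {S : CubeFamily X} {T : CubeFamily Y} {U : CubeFamily Z} {φ : X → Y} {g : X → Z}
    {h : Y → Z} {r : ℕ} (hS : S.IsCubespace) (hT : T.IsCubespace) (hgS : IsGluing S)
    (hφ : ∀ n, ∀ c ∈ S.cubes n, φ ∘ c ∈ T.cubes n) (hh : HasUniquenessAt T U h (r + 2))
    (hcomp : ∀ x, g x = h (φ x))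
    (hvert : ∀ x x' : X, RelCanonRel T h r (φ x) (φ x') → RelCanonRel S g r x x')
    {v : X → X} (hgv : ∀ x, g (v x) = g x)
    (hv : ∀ z, ∀ d ∈ (subFamily S (g ⁻¹' {z})).cubes (r + 1),
      concatCube d (v ∘ d) ∈ S.cubes (r + 2)) :
    FactorsThrough (φ ∘ v) φ := by
  intro x x' hxx'
  have hrel : CanonRel S r x x' :=
    (hvert x x' ⟨by rw [← hxx']; exact CanonRel.refl hT r _, congrArg h hxx'⟩).1
  have hgx : g x' = g x := by rw [hcomp, hcomp, hxx']
  set d : (Fin (r + 1) → Bool) → X := fun _ => x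
  set d' := update d (topVtx (r + 1)) x'
  have hd'_ne : ∀ w, w ≠ topVtx (r + 1) → d' w = x := fun w hw => update_of_ne hw _ _
  have hd : d ∈ (subFamily S (g ⁻¹' {g x})).cubes (r + 1) :=
    ⟨hS.const_mem x _, fun _ => rfl⟩
  have hd' : d' ∈ (subFamily S (g ⁻¹' {g x})).cubes (r + 1) := by
    refine ⟨hrel.update_const_mem hS.closedUnderMorphisms hgS, fun w => ?_⟩
    by_cases hw : w = topVtx (r + 1)
    · simp [d', hw, hgx]
    · simp [hd'_ne w hw]
  have hfib : ∀ e ∈ (subFamily S (g ⁻¹' {g x})).cubes (r + 1), ∀ ω,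
      h (φ (concatCube e (v ∘ e) ω)) = g x := by
    intro e he ω
    induction ω using Fin.snocCases with
    | _ w b => cases b <;> simpa [← hcomp, hgv] using he.2 w
  have hagree : ∀ ω, ω ≠ topVtx (r + 2) →
      φ (concatCube d (v ∘ d) ω) = φ (concatCube d' (v ∘ d') ω) := by
    intro ω hω
    induction ω using Fin.snocCases with
    | _ w b =>
      by_cases hw : w = topVtx (r + 1)
      · obtain rfl : b = false := by simpa [snoc_eq_topVtx_iff, hw] using hω
        simp [d, d', hw, hxx']
      · cases b <;> simp [d, hd'_ne w hw]
  have key := hh _ (hφ _ _ (hv _ d hd)) _ (hφ _ _ (hv _ d' hd')) hagree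
    (funext fun ω => (hfib d hd ω).trans (hfib d' hd' ω).symm)
  simpa [concatCube_topVtx, d'] using congrFun key (topVtx (r + 2))

section Subcube

variable {n : ℕ}

def supp (v : Fin n → Bool) : Finset (Fin n) := Finset.univ.filter (v · = true)

theorem mem_supp {v : Fin n → Bool} {j : Fin n} : j ∈ supp v ↔ v j = true := by
  simp [supp]

theorem card_supp_lt {a b : Fin n → Bool} (hab : ∀ j, a j = true → b j = true) {j : Fin n}
    (hbj : b j = true) (haj : a j = false) : (supp a).card < (supp b).card :=
  Finset.card_lt_card <| (Finset.ssubset_iff_of_subset fun i hi => mem_supp.2 (hab i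
    (mem_supp.1 hi))).2 ⟨j, mem_supp.2 hbj, by simp [mem_supp, haj]⟩

theorem card_supp_and_le (v ω : Fin n → Bool) :
    (supp fun j => v j && ω j).card ≤ (supp v).card :=
  Finset.card_le_card fun j hj => mem_supp.2 (by simp_all [mem_supp])

/-- The embedding of the cube `{0,1}^|v|` onto the subcube `{ω | ω ≤ v}`. -/
noncomputable def subcubeEmb (v : Fin n → Bool) (w : Fin (supp v).card → Bool) :
    Fin n → Bool :=
  fun j => if h : j ∈ supp v then w ((supp v).equivFin ⟨j, h⟩) else false

noncomputable def subcubeProj (v : Fin n → Bool) (ω : Fin n → Bool) :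
    Fin (supp v).card → Bool :=
  fun i => ω ((supp v).equivFin.symm i)

theorem isDiscreteCubeMorphism_subcubeEmb (v : Fin n → Bool) :
    IsDiscreteCubeMorphism (subcubeEmb v) := by
  intro j
  by_cases h : j ∈ supp v
  · exact Or.inr <| Or.inr <| Or.inl ⟨_, fun w => dif_pos h⟩
  · exact Or.inl fun w => dif_neg h

theorem subcubeEmb_apply_equivFin_symm (v : Fin n → Bool) (w : Fin (supp v).card → Bool)
    (i : Fin (supp v).card) : subcubeEmb v w ((supp v).equivFin.symm i) = w i := by
  simp [subcubeEmb]

theorem subcubeEmb_subcubeProj (v ω : Fin n → Bool) :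
    subcubeEmb v (subcubeProj v ω) = fun j => v j && ω j := by
  funext j
  by_cases h : v j = true
  · simp [subcubeEmb, subcubeProj, mem_supp.2 h, h]
  · simp [subcubeEmb, mem_supp, h]

theorem subcubeEmb_topVtx (v : Fin n → Bool) : subcubeEmb v (topVtx _) = v := by
  have h := subcubeEmb_subcubeProj v (topVtx n)
  simp only [topVtx, Bool.and_true] at h
  exact h

theorem subcubeEmb_update_false (v : Fin n → Bool) (w : Fin (supp v).card → Bool)
    (i : Fin (supp v).card) :
    subcubeEmb v (update w i false) =
      fun j => update v ((supp v).equivFin.symm i) false j && subcubeEmb v w j := by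
  funext j
  by_cases hj : j ∈ supp v
  · have hvj : v j = true := mem_supp.1 hj
    by_cases hji : (supp v).equivFin ⟨j, hj⟩ = i
    · obtain rfl : j = (supp v).equivFin.symm i := by rw [← hji]; simp
      simp [subcubeEmb_apply_equivFin_symm]
    · have hne : j ≠ (supp v).equivFin.symm i := fun h => hji (by simp [h])
      simp [subcubeEmb, hj, hji, hne, hvj]
  · have hne : j ≠ (supp v).equivFin.symm i := fun h => hj (h ▸ Subtype.prop _)
    simp [subcubeEmb, hj, hne]

theorem card_supp_subcubeEmb_lt {v : Fin n → Bool} {w : Fin (supp v).card → Bool}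
    (hw : w ≠ topVtx _) : (supp (subcubeEmb v w)).card < (supp v).card := by
  obtain ⟨i, hi⟩ : ∃ i, w i = false := by
    by_contra! h
    exact hw (funext fun i => by simpa [topVtx] using h i)
  refine card_supp_lt (fun j hj => ?_) (j := (supp v).equivFin.symm i)
    (mem_supp.1 ((supp v).equivFin.symm i).2) (by rw [subcubeEmb_apply_equivFin_symm, hi])
  by_contra hvj
  simp [subcubeEmb, mem_supp, hvj] at hj

end Subcube

section Lifting

variable {X Y : Type*} {S : CubeFamily X} {T : CubeFamily Y} {φ : X → Y} {n : ℕ}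

def LiftsCubes (S : CubeFamily X) (T : CubeFamily Y) (φ : X → Y) : Prop :=
  ∀ n, ∀ c ∈ T.cubes n, ∃ d ∈ S.cubes n, φ ∘ d = c

/-- `f` restricts to a cube of `S` on the subcube `{ω | ω ≤ v}`. -/
def IsCubeBelow (S : CubeFamily X) (f : (Fin n → Bool) → X) (v : Fin n → Bool) : Prop :=
  (fun ω => f fun j => v j && ω j) ∈ S.cubes n

theorem exists_completion_below (hS : S.ClosedUnderMorphisms) (hT : T.ClosedUnderMorphisms)
    (hφ : ∀ k, HasCompletionAt S T φ k) {c : (Fin n → Bool) → Y} (hc : c ∈ T.cubes n)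
    {f : (Fin n → Bool) → X} (hfc : φ ∘ f = c) {v : Fin n → Bool}
    (hf : ∀ v', (supp v').card < (supp v).card → IsCubeBelow S f v') :
    ∃ c₀ ∈ S.cubes (supp v).card, (∀ w, w ≠ topVtx _ → c₀ w = f (subcubeEmb v w)) ∧
      φ ∘ c₀ = c ∘ subcubeEmb v := by
  refine hφ _ _ _ (fun i => ?_) (hT _ (isDiscreteCubeMorphism_subcubeEmb v) _ hc)
    (fun w _ => congrFun hfc _)
  have hlt : (supp (update v ((supp v).equivFin.symm i) false)).card < (supp v).card :=
    card_supp_lt (fun j hj => by by_cases h : j = (supp v).equivFin.symm i <;> simp_all)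
      (mem_supp.1 ((supp v).equivFin.symm i).2) (by simp)
  simpa only [subcubeEmb_update_false] using
    hS _ (isDiscreteCubeMorphism_subcubeEmb v) _ (hf _ hlt)

theorem isCubeBelow_of_completion (hS : S.ClosedUnderMorphisms) {v : Fin n → Bool}
    {c₀ : (Fin (supp v).card → Bool) → X} (hc₀ : c₀ ∈ S.cubes (supp v).card)
    {f : (Fin n → Bool) → X} (htop : f v = c₀ (topVtx _))
    (hbelow : ∀ w, w ≠ topVtx _ → f (subcubeEmb v w) = c₀ w) : IsCubeBelow S f v := by
  have : (fun ω => f fun j => v j && ω j) = c₀ ∘ subcubeProj v := by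
    funext ω
    rw [comp_apply, ← subcubeEmb_subcubeProj]
    by_cases hw : subcubeProj v ω = topVtx _
    · rw [hw, subcubeEmb_topVtx, htop]
    · exact hbelow _ hw
  rw [IsCubeBelow, this]
  exact hS (subcubeProj v) (isDiscreteCubeMorphism_reindex _) _ hc₀

/-- The lift is corrected at the vertices of weight `m` by completing the corners below them. -/
theorem exists_lift_isCubeBelow_succ (hS : S.ClosedUnderMorphisms)
    (hT : T.ClosedUnderMorphisms) (hφ : ∀ k, HasCompletionAt S T φ k)
    {c : (Fin n → Bool) → Y} (hc : c ∈ T.cubes n) {m : ℕ} {f : (Fin n → Bool) → X}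
    (hfc : φ ∘ f = c) (hf : ∀ v, (supp v).card < m → IsCubeBelow S f v) :
    ∃ f' : (Fin n → Bool) → X,
      φ ∘ f' = c ∧ ∀ v, (supp v).card < m + 1 → IsCubeBelow S f' v := by
  choose c₀ hc₀ hc₀f hc₀c using fun v (hv : (supp v).card = m) =>
    exists_completion_below hS hT hφ hc hfc fun v' h => hf v' (hv ▸ h)
  set f' : (Fin n → Bool) → X := fun v =>
    if hv : (supp v).card = m then c₀ v hv (topVtx _) else f v
  have hf'_lt : ∀ v, (supp v).card < m → f' v = f v := fun v hv => dif_neg hv.ne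
  refine ⟨f', funext fun v => ?_, fun v hv => ?_⟩
  · by_cases hvm : (supp v).card = m
    · simpa [f', hvm, subcubeEmb_topVtx] using congrFun (hc₀c v hvm) (topVtx _)
    · simpa [f', hvm] using congrFun hfc v
  · rcases Nat.lt_succ_iff_lt_or_eq.1 hv with hvm | hvm
    · have : (fun ω : Fin n → Bool => f' fun j => v j && ω j) =
          fun ω => f fun j => v j && ω j :=
        funext fun ω => hf'_lt _ ((card_supp_and_le v ω).trans_lt hvm)
      rw [IsCubeBelow, this]
      exact hf v hvm
    · refine isCubeBelow_of_completion hS (hc₀ v hvm) (dif_pos hvm) fun w hw => ?_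
      rw [hf'_lt _ (hvm ▸ card_supp_subcubeEmb_lt hw), hc₀f v hvm w hw]

theorem liftsCubes_of_completion (hS : S.ClosedUnderMorphisms) (hT : T.ClosedUnderMorphisms)
    (hφ : ∀ k, HasCompletionAt S T φ k) (hsurj : Surjective φ) : LiftsCubes S T φ := by
  intro n c hc
  have key : ∀ m, ∃ f : (Fin n → Bool) → X,
      φ ∘ f = c ∧ ∀ v, (supp v).card < m → IsCubeBelow S f v := by
    intro m
    induction m with
    | zero => exact ⟨surjInv hsurj ∘ c, funext fun ω => surjInv_eq hsurj _,
        by simp⟩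
    | succ m ih =>
      obtain ⟨f, hfc, hf⟩ := ih
      exact exists_lift_isCubeBelow_succ hS hT hφ hc hfc hf
  obtain ⟨f, hfc, hf⟩ := key (n + 1)
  refine ⟨f, ?_, hfc⟩
  simpa [IsCubeBelow, topVtx] using
    hf (topVtx n) (Nat.lt_succ_of_le ((Finset.card_le_univ _).trans (Fintype.card_fin n).le))

end Lifting

section Pushforward

variable {X Y Z : Type*} {φ : X → Y} {u v : X → X}

noncomputable def pushforward (φ : X → Y) (u : X → X) : Y → Y :=
  extend φ (φ ∘ u) id

theorem pushforward_apply (hu : FactorsThrough (φ ∘ u) φ) (x : X) :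
    pushforward φ u (φ x) = φ (u x) :=
  hu.extend_apply id x

theorem pushforward_comp (hφ : Surjective φ) (hu : FactorsThrough (φ ∘ u) φ)
    (hv : FactorsThrough (φ ∘ v) φ) :
    pushforward φ (u ∘ v) = pushforward φ u ∘ pushforward φ v := by
  funext y
  obtain ⟨x, rfl⟩ := hφ y
  rw [comp_apply, pushforward_apply hv, pushforward_apply hu]
  exact pushforward_apply (u := u ∘ v) (fun a b hab => @hu (v a) (v b) (hv hab)) x

theorem leftInverse_pushforward (hφ : Surjective φ)
    (hu : FactorsThrough (φ ∘ u) φ) (hv : FactorsThrough (φ ∘ v) φ)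
    (hvu : LeftInverse v u) :
    LeftInverse (pushforward φ v) (pushforward φ u) := by
  intro y
  obtain ⟨x, rfl⟩ := hφ y
  rw [pushforward_apply hu, pushforward_apply hv, hvu x]

theorem continuous_pushforward [TopologicalSpace X] [TopologicalSpace Y]
    (hφ : Topology.IsQuotientMap φ) (hu : Continuous u)
    (hud : FactorsThrough (φ ∘ u) φ) : Continuous (pushforward φ u) := by
  rw [hφ.continuous_iff,
    show pushforward φ u ∘ φ = φ ∘ u from funext (pushforward_apply hud)]
  exact hφ.continuous.comp hu

theorem IsTranslationOf.of_semiconj {S : CubeFamily X} {T : CubeFamily Y} {u' : Y → Y} {k : ℕ}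
    (hφ : ∀ n, ∀ c ∈ S.cubes n, φ ∘ c ∈ T.cubes n) (hlift : LiftsCubes S T φ)
    (hsemi : ∀ x, u' (φ x) = φ (u x)) (hu : Surjective u)
    (hu' : Injective u') (ht : IsTranslationOf S u k) : IsTranslationOf T u' k := by
  refine ⟨fun n C => ⟨fun hC => ?_, fun hC => ?_⟩, fun n hkn F hF C hC => ?_⟩
  · obtain ⟨d, hd, rfl⟩ := hlift n C hC
    simpa [comp_def, hsemi] using hφ n _ ((ht.1 n d).1 hd)
  · obtain ⟨d, hd, hdC⟩ := hlift n _ hC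
    have he : surjInv hu ∘ d ∈ S.cubes n :=
      (ht.1 n _).2 (by simpa [surjInv_eq hu] using hd)
    have : φ ∘ (surjInv hu ∘ d) = C := funext fun ω => hu' <| by
      simpa [hsemi, surjInv_eq hu] using congrFun hdC ω
    exact this ▸ hφ n _ he
  · obtain ⟨d, hd, rfl⟩ := hlift n C hC
    convert hφ n _ (ht.2 n hkn F hF d hd) using 1
    funext ω
    simp only [faceModify, comp_apply]
    split_ifs <;> simp [hsemi]

theorem memAut_pushforward [TopologicalSpace X] [TopologicalSpace Y] {S : CubeFamily X}
    {T : CubeFamily Y} {g : X → Z} {h : Y → Z} {k : ℕ} (hφ : Topology.IsQuotientMap φ)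
    (hφS : ∀ n, ∀ c ∈ S.cubes n, φ ∘ c ∈ T.cubes n) (hlift : LiftsCubes S T φ)
    (hcomp : ∀ x, g x = h (φ x)) (hu : MemAut S g u k) (hvu : LeftInverse v u)
    (huv : RightInverse v u) (hv : Continuous v)
    (hud : FactorsThrough (φ ∘ u) φ) (hvd : FactorsThrough (φ ∘ v) φ) :
    MemAut T h (pushforward φ u) k := by
  have hinv := leftInverse_pushforward hφ.surjective hud hvd hvu
  refine ⟨isHomeomorph_iff_exists_inverse.2 ⟨continuous_pushforward hφ hu.1.continuous hud,
    pushforward φ v, hinv, leftInverse_pushforward hφ.surjective hvd hud huv,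
    continuous_pushforward hφ hv hvd⟩, fun y => ?_, fun z => ?_⟩
  · obtain ⟨x, rfl⟩ := hφ.surjective y
    rw [pushforward_apply hud, ← hcomp, ← hcomp, hu.2.1]
  · refine IsTranslationOf.of_semiconj (S := subFamily S (g ⁻¹' {z}))
      (T := subFamily T (h ⁻¹' {z})) (fun n c hc => ⟨hφS n c hc.1, fun ω => ?_⟩)
      (fun n C hC => ?_) (pushforward_apply hud) hu.1.surjective hinv.injective (hu.2.2 z)
    · simpa [← hcomp] using hc.2 ω
    · obtain ⟨d, hd, rfl⟩ := hlift n C hC.1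
      exact ⟨d, ⟨hd, fun ω => by simpa [hcomp] using hC.2 ω⟩, rfl⟩

end Pushforward

theorem pushforward_translations_general {X Y Z : Type*}
    [MetricSpace X] [MetricSpace Y] [MetricSpace Z]
    [CompactSpace X]
    (S : CubeFamily X) (T : CubeFamily Y) (U : CubeFamily Z)
    (hS : S.IsCubespace) (hT : T.IsCubespace)
    (hgS : IsGluing S)
    (s : ℕ) (hs : 1 ≤ s)
    (φ : X → Y) (g : X → Z) (h : Y → Z)
    (hφ : IsSFibration S T φ s) (hh : IsSFibration T U h s)
    (hφsurj : Function.Surjective φ) (hcomp : ∀ x, g x = h (φ x))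
    (hvert : ∀ x x' : X, RelCanonRel T h (s - 1) (φ x) (φ x') →
      RelCanonRel S g (s - 1) x x')
    (i : ℕ) (hi : 1 ≤ i) :
    ∃ Φ : (X → X) → (Y → Y),
      (∀ u : X → X, MemAut S g u i →
        MemAut T h (Φ u) i ∧ ∀ x : X, Φ u (φ x) = φ (u x)) ∧
      ∀ u v : X → X, MemAut S g u i → MemAut S g v i → Φ (u ∘ v) = Φ u ∘ Φ v := by
  obtain ⟨r, rfl⟩ : ∃ r, s = r + 1 := ⟨s - 1, by omega⟩
  have hS' : S.ClosedUnderMorphisms := hS.closedUnderMorphisms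
  have hq : Topology.IsQuotientMap φ := hφ.1.1.1.isClosedMap.isQuotientMap hφ.1.1.1 hφsurj
  have hdesc : ∀ v : X → X, (∀ x, g (v x) = g x) →
      (∀ z, ∀ d ∈ (subFamily S (g ⁻¹' {z})).cubes (r + 1),
        concatCube d (v ∘ d) ∈ S.cubes (r + 2)) → FactorsThrough (φ ∘ v) φ :=
    fun _ => factorsThrough_of_vertical hS hT hgS hφ.1.1.2 hh.2 hcomp hvert
  have htr : ∀ u, MemAut S g u i → ∀ z, IsTranslationOf (subFamily S (g ⁻¹' {z})) u 1 :=
    fun u hu z => (hu.2.2 z).of_le (hS'.subFamily _) hi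
  have hAut : ∀ u, MemAut S g u i → FactorsThrough (φ ∘ u) φ := fun u hu =>
    hdesc u hu.2.1 fun z _ hd => ((htr u hu z).concatCube_mem (hS'.subFamily _) hd).1
  refine ⟨pushforward φ, fun u hu => ⟨?_, pushforward_apply (hAut u hu)⟩,
    fun u v hu hv => pushforward_comp hφsurj (hAut u hu) (hAut v hv)⟩
  obtain ⟨-, v, hvu, huv, hv⟩ := isHomeomorph_iff_exists_inverse.1 hu.1
  refine memAut_pushforward hq hφ.1.1.2
    (liftsCubes_of_completion hS' hT.closedUnderMorphisms hφ.1.2 hφsurj) hcomp hu hvu huv hv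
    (hAut u hu) (hdesc v (fun x => ?_) fun z _ hd => ?_)
  · rw [← hu.2.1 (v x), huv x]
  · exact ((htr u hu z).concatCube_inv_mem (hS'.subFamily _) huv hd).1

/-- pushforward of relative translations along vertical fibrations: let
`φ : X → Y`, `g : X → Z`, `h : Y → Z` be `s`-fibrations between compact ergodic gluing
cubespaces with `g = h ∘ φ`, `φ` surjective and vertical.  Then for every `i ≥ 1` there
is a group homomorphism `Φ : Aut_i(g) → Aut_i(h)` with `Φ(u) ∘ φ = φ ∘ u` for all
`u ∈ Aut_i(g)`. -/
theorem pushforward_translations {X Y Z : Type*}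
    [MetricSpace X] [MetricSpace Y] [MetricSpace Z]
    [CompactSpace X] [CompactSpace Y] [CompactSpace Z]
    (S : CubeFamily X) (T : CubeFamily Y) (U : CubeFamily Z)
    (hS : S.IsCubespace) (hT : T.IsCubespace) (hU : U.IsCubespace)
    (heS : IsErgodic S) (heT : IsErgodic T) (heU : IsErgodic U)
    (hgS : IsGluing S) (hgT : IsGluing T) (hgU : IsGluing U)
    (s : ℕ) (hs : 1 ≤ s)
    (φ : X → Y) (g : X → Z) (h : Y → Z)
    (hφ : IsSFibration S T φ s) (hg : IsSFibration S U g s) (hh : IsSFibration T U h s)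
    (hφsurj : Function.Surjective φ) (hcomp : ∀ x, g x = h (φ x))
    (hvert : ∀ x x' : X, RelCanonRel T h (s - 1) (φ x) (φ x') →
      RelCanonRel S g (s - 1) x x')
    (i : ℕ) (hi : 1 ≤ i) :
    ∃ Φ : (X → X) → (Y → Y),
      (∀ u : X → X, MemAut S g u i →
        MemAut T h (Φ u) i ∧ ∀ x : X, Φ u (φ x) = φ (u x)) ∧
      ∀ u v : X → X, MemAut S g u i → MemAut S g v i → Φ (u ∘ v) = Φ u ∘ Φ v :=
  pushforward_translations_general S T U hS hT hgS s hs φ g h hφ hh hφsurj hcomp hvert i hi
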